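/- arXiv:1708.09555 — 4 statements merged into one kernel-verified Lean document; each statement's English description precedes it below -/
import Mathlib

section
/- For all real numbers $a$ and $y$, $(\cosh-1)_*(ay) \le \max(1,a^2)\,(\cosh-1)_*(y)$, where $(\cosh-1)_*$ denotes the convex conjugate (Legendre transform) of the function $u \mapsto \cosh u - 1$. -/
open MeasureTheory Real Filter Topology
open scoped ENNReal

noncomputable def gaussM (n : ℕ) (x : EuclideanSpace ℝ (Fin n)) : ℝ :=
  (2 * π) ^ (-(n : ℝ) / 2) * Real.exp (-‖x‖ ^ 2 / 2)

noncomputable def orliczInt (n : ℕ) (ρ : ℝ) (f : EuclideanSpace ℝ (Fin n) → ℝ) : ℝ≥0∞ :=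
  ∫⁻ x, ENNReal.ofReal (Real.cosh (ρ * f x) - 1) * ENNReal.ofReal (gaussM n x)

def MemLexp (n : ℕ) (f : EuclideanSpace ℝ (Fin n) → ℝ) : Prop :=
  ∃ ρ > 0, orliczInt n ρ f < ⊤

noncomputable def luxNorm (n : ℕ) (f : EuclideanSpace ℝ (Fin n) → ℝ) : ℝ :=
  sInf {c : ℝ | 0 < c ∧ orliczInt n (1 / c) f ≤ 1}

noncomputable def coshStar (y : ℝ) : ℝ := ⨆ u : ℝ, (u * y - (Real.cosh u - 1))

lemma sinh_convexOn : ConvexOn ℝ (Set.Ici 0) Real.sinh := by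
  refine MonotoneOn.convexOn_of_deriv (convex_Ici 0) Real.continuous_sinh.continuousOn
    Real.differentiable_sinh.differentiableOn ?_
  rw [Real.deriv_sinh]
  intro x hx y hy hxy
  rw [interior_Ici] at hx hy
  rw [Real.cosh_le_cosh]
  rwa [abs_of_pos hx, abs_of_pos hy]

lemma sinh_smul_le {t x : ℝ} (ht0 : 0 ≤ t) (ht1 : t ≤ 1) (hx : 0 ≤ x) :
    Real.sinh (t * x) ≤ t * Real.sinh x := by
  have := sinh_convexOn.2 (Set.mem_Ici.2 hx) (Set.mem_Ici.2 le_rfl) ht0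
    (by linarith : (0:ℝ) ≤ 1 - t) (by ring)
  simpa [smul_eq_mul, Real.sinh_zero] using this

lemma cosh_sub_one_eq (x : ℝ) : Real.cosh x - 1 = 2 * Real.sinh (x / 2) ^ 2 := by
  have h : x = 2 * (x / 2) := by ring
  rw [h, Real.cosh_two_mul, Real.cosh_sq]
  ring

lemma cosh_key {t : ℝ} (u : ℝ) (ht : |t| ≤ 1) :
    Real.cosh (t * u) - 1 ≤ t ^ 2 * (Real.cosh u - 1) := by
  rw [cosh_sub_one_eq, cosh_sub_one_eq]
  have h1 : Real.sinh (t * u / 2) ^ 2 = Real.sinh (|t| * |u / 2|) ^ 2 := by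
    have : |t| * |u / 2| = |t * u / 2| := by rw [← abs_mul]; congr 1; ring
    rw [this]
    rcases abs_cases (t * u / 2) with ⟨h, _⟩ | ⟨h, _⟩ <;> rw [h] <;> simp [Real.sinh_neg]
  have h2 : Real.sinh (|t| * |u / 2|) ≤ |t| * Real.sinh |u / 2| :=
    sinh_smul_le (abs_nonneg t) ht (abs_nonneg _)
  have h3 : 0 ≤ Real.sinh (|t| * |u / 2|) :=
    Real.sinh_nonneg_iff.2 (mul_nonneg (abs_nonneg _) (abs_nonneg _))
  have h4 : Real.sinh (|t| * |u / 2|) ^ 2 ≤ (|t| * Real.sinh |u / 2|) ^ 2 :=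
    pow_le_pow_left₀ h3 h2 2
  have h5 : Real.sinh |u / 2| ^ 2 = Real.sinh (u / 2) ^ 2 := by
    rcases abs_cases (u / 2) with ⟨h, _⟩ | ⟨h, _⟩ <;> rw [h] <;> simp [Real.sinh_neg]
  have h6 : |t| ^ 2 = t ^ 2 := sq_abs t
  rw [h1]
  nlinarith [h4, h5, h6]

lemma coshStar_bdd (y : ℝ) : BddAbove (Set.range fun u : ℝ => u * y - (Real.cosh u - 1)) := by
  refine ⟨y ^ 2 / 2, ?_⟩
  rintro _ ⟨u, rfl⟩
  have h1 : u ^ 2 / 2 ≤ Real.cosh u - 1 := by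
    rw [cosh_sub_one_eq]
    have h : |u / 2| ≤ Real.sinh |u / 2| := Real.self_le_sinh_iff.2 (abs_nonneg _)
    have h2 : Real.sinh |u / 2| ^ 2 = Real.sinh (u / 2) ^ 2 := by
      rcases abs_cases (u / 2) with ⟨hh, _⟩ | ⟨hh, _⟩ <;> rw [hh] <;> simp [Real.sinh_neg]
    nlinarith [abs_nonneg (u / 2), sq_abs (u / 2)]
  nlinarith [sq_nonneg (u - y), sq_nonneg (u + y)]

theorem coshStar_delta2 (a y : ℝ) :
    coshStar (a * y) ≤ max 1 (a ^ 2) * coshStar y := by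
  set M := max 1 (a ^ 2) with hMdef
  have hM1 : (1 : ℝ) ≤ M := le_max_left _ _
  have hM0 : (0 : ℝ) < M := lt_of_lt_of_le one_pos hM1
  have ha2 : a ^ 2 ≤ M := le_max_right _ _
  have haM : |a| ≤ M := by nlinarith [abs_nonneg a, sq_abs a]
  have habs : |a / M| ≤ 1 := by
    rw [abs_div, abs_of_pos hM0]
    exact (div_le_one hM0).2 haM
  unfold coshStar
  apply ciSup_le
  intro u
  have key := cosh_key u habs
  have hφ : 0 ≤ Real.cosh u - 1 := by linarith [Real.one_le_cosh u]
  set v := a / M * u with hv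
  have hb : M * (Real.cosh v - 1) ≤ Real.cosh u - 1 := by
    have h1 : M * (Real.cosh v - 1) ≤ M * ((a / M) ^ 2 * (Real.cosh u - 1)) :=
      mul_le_mul_of_nonneg_left key hM0.le
    have h2 : M * ((a / M) ^ 2 * (Real.cosh u - 1)) = a ^ 2 / M * (Real.cosh u - 1) := by
      field_simp
    have h3 : a ^ 2 / M ≤ 1 := (div_le_one hM0).2 ha2
    nlinarith
  have heq : M * (v * y) = u * (a * y) := by
    rw [hv]
    field_simp
  have step : u * (a * y) - (Real.cosh u - 1) ≤ M * (v * y - (Real.cosh v - 1)) := by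
    have : M * (v * y - (Real.cosh v - 1)) = M * (v * y) - M * (Real.cosh v - 1) := by ring
    rw [this, heq]
    linarith
  refine step.trans ?_
  exact mul_le_mul_of_nonneg_left (le_ciSup (coshStar_bdd y) v) hM0.le
end

section
/- Let $M$ be the standard Gaussian density on $\mathbb{R}^n$ and let $f: \mathbb{R}^n \to \mathbb{R}$ be twice continuously differentiable with Hessian uniformly bounded in operator norm. Then there exists $\rho > 0$ such that $\int (\cosh(\rho f(x)) - 1) M(x)\,dx < \infty$; in particular $f$ belongs to the exponential Orlicz space $L^{(\cosh-1)}(M)$. -/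
/-!
A Hessian bounded by `C` makes the gradient `C`-Lipschitz, so by the mean value theorem `f` grows
at most quadratically: `|f x| ≤ A + B ‖x‖²`. For `ρ = 1 / (4 B)` this gives
`cosh (ρ f x) - 1 ≤ exp |ρ f x| ≤ exp (ρ A) exp (‖x‖² / 4)`, which the Gaussian density
`exp (-‖x‖² / 2)` turns into an integrable `exp (-‖x‖² / 4)`.
-/

open MeasureTheory Real Filter Topology
open scoped ENNReal

section QuadraticGrowth

variable {E F : Type*} [NormedAddCommGroup E] [NormedSpace ℝ E] [NormedAddCommGroup F]
  [NormedSpace ℝ F] {f : E → F} {C : ℝ}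

lemma norm_fderiv_sub_le_of_norm_iteratedFDeriv_two_le (hf : ContDiff ℝ 2 f)
    (hC : ∀ x, ‖iteratedFDeriv ℝ 2 f x‖ ≤ C) (x y : E) :
    ‖fderiv ℝ f y - fderiv ℝ f x‖ ≤ C * ‖y - x‖ := by
  have hdiff : Differentiable ℝ (fderiv ℝ f) :=
    (hf.fderiv_right (m := 1) le_rfl).differentiable one_ne_zero
  refine convex_univ.norm_image_sub_le_of_norm_fderiv_le (fun z _ ↦ hdiff z) (fun z _ ↦ ?_)
    trivial trivial
  rw [← norm_iteratedFDeriv_one, norm_iteratedFDeriv_fderiv]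
  exact hC z

lemma norm_sub_le_of_norm_iteratedFDeriv_two_le (hf : ContDiff ℝ 2 f)
    (hC : ∀ x, ‖iteratedFDeriv ℝ 2 f x‖ ≤ C) (x y : E) :
    ‖f y - f x‖ ≤ (‖fderiv ℝ f x‖ + C * ‖y - x‖) * ‖y - x‖ := by
  have hC0 : 0 ≤ C := (norm_nonneg _).trans (hC x)
  have hball : ∀ z ∈ Metric.closedBall x ‖y - x‖,
      ‖fderiv ℝ f z‖ ≤ ‖fderiv ℝ f x‖ + C * ‖y - x‖ := by
    intro z hz
    rw [Metric.mem_closedBall, dist_eq_norm] at hz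
    calc ‖fderiv ℝ f z‖ ≤ ‖fderiv ℝ f x‖ + ‖fderiv ℝ f z - fderiv ℝ f x‖ := norm_le_insert' _ _
      _ ≤ ‖fderiv ℝ f x‖ + C * ‖y - x‖ := by
        gcongr
        exact (norm_fderiv_sub_le_of_norm_iteratedFDeriv_two_le hf hC x z).trans
          (mul_le_mul_of_nonneg_left hz hC0)
  exact (convex_closedBall x _).norm_image_sub_le_of_norm_fderiv_le
    (fun z _ ↦ hf.differentiable two_ne_zero z) hball (Metric.mem_closedBall_self (norm_nonneg _))
    (by simp [dist_eq_norm])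

lemma exists_norm_le_add_mul_sq_norm_of_norm_iteratedFDeriv_two_le (hf : ContDiff ℝ 2 f)
    (hC : ∀ x, ‖iteratedFDeriv ℝ 2 f x‖ ≤ C) :
    ∃ A B : ℝ, 0 < B ∧ ∀ x, ‖f x‖ ≤ A + B * ‖x‖ ^ 2 := by
  have hC0 : 0 ≤ C := (norm_nonneg _).trans (hC 0)
  set D := ‖fderiv ℝ f 0‖
  refine ⟨‖f 0‖ + D, D + C + 1, by positivity, fun x ↦ ?_⟩
  have hx : ‖x‖ ≤ 1 + ‖x‖ ^ 2 := by nlinarith [sq_nonneg (‖x‖ - 1)]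
  have h := norm_sub_le_of_norm_iteratedFDeriv_two_le hf hC 0 x
  rw [sub_zero] at h
  calc ‖f x‖ ≤ ‖f 0‖ + ‖f x - f 0‖ := norm_le_insert' _ _
    _ ≤ ‖f 0‖ + D * ‖x‖ + C * ‖x‖ ^ 2 := by linarith
    _ ≤ ‖f 0‖ + D + (D + C + 1) * ‖x‖ ^ 2 := by
      nlinarith [norm_nonneg x, norm_nonneg (fderiv ℝ f 0)]

end QuadraticGrowth

lemma integrable_exp_neg_mul_sq_norm {V : Type*} [NormedAddCommGroup V] [InnerProductSpace ℝ V]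
    [FiniteDimensional ℝ V] [MeasurableSpace V] [BorelSpace V] {b : ℝ} (hb : 0 < b) :
    Integrable (fun v : V ↦ Real.exp (-b * ‖v‖ ^ 2)) := by
  refine (GaussianFourier.integrable_cexp_neg_mul_sq_norm_add (b := (b : ℂ)) (by simpa) 0
    (0 : V)).norm.congr (Eventually.of_forall fun v ↦ ?_)
  simp [Complex.norm_exp, ← Complex.ofReal_pow]

lemma cosh_sub_one_le_exp_abs (t : ℝ) : Real.cosh t - 1 ≤ Real.exp |t| := by
  rw [← Real.cosh_abs, Real.cosh_eq]
  linarith [Real.exp_le_exp.2 (neg_le_self (abs_nonneg t)), Real.exp_pos (-|t|)]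

lemma orliczInt_lt_top_of_abs_le_add_mul_sq_norm {n : ℕ} {f : EuclideanSpace ℝ (Fin n) → ℝ}
    {A B : ℝ} (hB : 0 < B) (hf : ∀ x, |f x| ≤ A + B * ‖x‖ ^ 2) :
    orliczInt n (4 * B)⁻¹ f < ⊤ := by
  set ρ := (4 * B)⁻¹
  set c := (2 * π) ^ (-(n : ℝ) / 2)
  have hρ : 0 < ρ := by positivity
  have hbound : ∀ x, (Real.cosh (ρ * f x) - 1) * gaussM n x
      ≤ c * Real.exp (ρ * A) * Real.exp (-(1 / 4) * ‖x‖ ^ 2) := by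
    intro x
    have hρf : |ρ * f x| ≤ ρ * A + ‖x‖ ^ 2 / 4 := by
      rw [abs_mul, abs_of_pos hρ]
      calc ρ * |f x| ≤ ρ * (A + B * ‖x‖ ^ 2) := by gcongr; exact hf x
        _ = ρ * A + ‖x‖ ^ 2 / 4 := by simp only [ρ]; field_simp
    calc (Real.cosh (ρ * f x) - 1) * gaussM n x
        ≤ Real.exp (ρ * A + ‖x‖ ^ 2 / 4) * (c * Real.exp (-‖x‖ ^ 2 / 2)) := by
          unfold gaussM
          gcongr
          exact (cosh_sub_one_le_exp_abs _).trans (Real.exp_le_exp.2 hρf)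
      _ = c * Real.exp (ρ * A) * Real.exp (-(1 / 4) * ‖x‖ ^ 2) := by
          rw [mul_left_comm, mul_assoc, ← Real.exp_add, ← Real.exp_add]
          ring_nf
  calc orliczInt n ρ f
      = ∫⁻ x, ENNReal.ofReal ((Real.cosh (ρ * f x) - 1) * gaussM n x) := by
        refine lintegral_congr fun x ↦ (ENNReal.ofReal_mul ?_).symm
        linarith [Real.one_le_cosh (ρ * f x)]
    _ ≤ ∫⁻ x, ENNReal.ofReal (c * Real.exp (ρ * A) * Real.exp (-(1 / 4) * ‖x‖ ^ 2)) :=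
        lintegral_mono fun x ↦ ENNReal.ofReal_le_ofReal (hbound x)
    _ < ⊤ := ((integrable_exp_neg_mul_sq_norm (by norm_num)).const_mul _).lintegral_lt_top

theorem memLexp_of_bounded_hessian (n : ℕ) (f : EuclideanSpace ℝ (Fin n) → ℝ)
    (hf : ContDiff ℝ 2 f) (C : ℝ) (hC : ∀ x, ‖iteratedFDeriv ℝ 2 f x‖ ≤ C) :
    (∃ ρ > 0, orliczInt n ρ f < ⊤) ∧ MemLexp n f := by
  obtain ⟨A, B, hB, hgrowth⟩ := exists_norm_le_add_mul_sq_norm_of_norm_iteratedFDeriv_two_le hf hC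
  have hρ : ∃ ρ > 0, orliczInt n ρ f < ⊤ :=
    ⟨(4 * B)⁻¹, by positivity, orliczInt_lt_top_of_abs_le_add_mul_sq_norm hB hgrowth⟩
  exact ⟨hρ, hρ⟩
end

section
/- Let $M$ be the standard Gaussian density on $\mathbb{R}^n$. Every polynomial function $f: \mathbb{R}^n \to \mathbb{R}$ of degree at most 2 belongs to the exponential Orlicz space $L^{(\cosh-1)}(M)$, i.e. there exists $\rho > 0$ with $\int (\cosh(\rho f(x)) - 1) M(x)\,dx < \infty$. -/
open MeasureTheory Real Filter Topology
open scoped ENNReal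

lemma coord_abs_le_norm {n : ℕ} (x : EuclideanSpace ℝ (Fin n)) (i : Fin n) :
    |x i| ≤ ‖x‖ := by
  rw [EuclideanSpace.norm_eq]
  have h1 : |x i| ^ 2 ≤ ∑ j, ‖x j‖ ^ 2 := by
    have := Finset.single_le_sum (f := fun j => ‖x j‖ ^ 2)
      (fun j _ => by positivity) (Finset.mem_univ i)
    simpa [Real.norm_eq_abs] using this
  calc |x i| = Real.sqrt (|x i| ^ 2) := by rw [Real.sqrt_sq (abs_nonneg _)]
    _ ≤ _ := Real.sqrt_le_sqrt h1

lemma poly_bound {n : ℕ} (p : MvPolynomial (Fin n) ℝ) (hdeg : p.totalDegree ≤ 2)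
    (x : EuclideanSpace ℝ (Fin n)) :
    |MvPolynomial.eval (fun i => x i) p| ≤
      (∑ m ∈ p.support, |p.coeff m|) * (1 + ‖x‖) ^ 2 := by
  rw [MvPolynomial.eval_eq]
  calc |∑ m ∈ p.support, p.coeff m * ∏ i ∈ m.support, x i ^ m i|
      ≤ ∑ m ∈ p.support, |p.coeff m * ∏ i ∈ m.support, x i ^ m i| :=
        Finset.abs_sum_le_sum_abs _ _
    _ ≤ ∑ m ∈ p.support, |p.coeff m| * (1 + ‖x‖) ^ 2 := by
        apply Finset.sum_le_sum
        intro m hm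
        rw [abs_mul]
        apply mul_le_mul_of_nonneg_left _ (abs_nonneg _)
        have h1x : (0:ℝ) ≤ 1 + ‖x‖ := by positivity
        calc |∏ i ∈ m.support, x i ^ m i|
            = ∏ i ∈ m.support, |x i| ^ m i := by
              rw [Finset.abs_prod]; simp [abs_pow]
          _ ≤ ∏ i ∈ m.support, (1 + ‖x‖) ^ m i := by
              apply Finset.prod_le_prod (fun i _ => by positivity)
              intro i _
              exact pow_le_pow_left₀ (abs_nonneg _)
                ((coord_abs_le_norm x i).trans (by linarith)) _
          _ = (1 + ‖x‖) ^ (∑ i ∈ m.support, m i) :=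
              Finset.prod_pow_eq_pow_sum _ _ _
          _ ≤ (1 + ‖x‖) ^ 2 := by
              apply pow_le_pow_right₀ (by linarith [norm_nonneg x])
              exact le_trans (MvPolynomial.le_totalDegree hm) hdeg
    _ = (∑ m ∈ p.support, |p.coeff m|) * (1 + ‖x‖) ^ 2 := by
        rw [Finset.sum_mul]

lemma integrable_rexp_neg_quarter (n : ℕ) :
    Integrable (fun x : EuclideanSpace ℝ (Fin n) => Real.exp (-(4:ℝ)⁻¹ * ‖x‖ ^ 2)) := by
  have h := GaussianFourier.integrable_cexp_neg_mul_sq_norm_add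
    (V := EuclideanSpace ℝ (Fin n)) (b := ((4:ℝ)⁻¹ : ℂ)) (by norm_num) 0 0
  have h2 : Integrable (fun x : EuclideanSpace ℝ (Fin n) =>
      Complex.exp (-(((4:ℝ)⁻¹ : ℂ)) * (‖x‖ : ℂ) ^ 2)) := by
    simpa using h
  have heq : ∀ x : EuclideanSpace ℝ (Fin n),
      Complex.exp (-(((4:ℝ)⁻¹ : ℂ)) * (‖x‖ : ℂ) ^ 2)
        = ((Real.exp (-(4:ℝ)⁻¹ * ‖x‖ ^ 2) : ℝ) : ℂ) := by
    intro x
    rw [Complex.ofReal_exp]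
    congr 1
    push_cast
    ring
  have h4 : Integrable (fun x : EuclideanSpace ℝ (Fin n) =>
      ((Real.exp (-(4:ℝ)⁻¹ * ‖x‖ ^ 2) : ℝ) : ℂ)) :=
    h2.congr (Filter.Eventually.of_forall heq)
  simpa only [RCLike.re_to_complex, Complex.ofReal_re] using h4.re

theorem memLexp_of_polynomial_deg_two (n : ℕ) (f : EuclideanSpace ℝ (Fin n) → ℝ)
    (p : MvPolynomial (Fin n) ℝ) (hdeg : p.totalDegree ≤ 2)
    (hfp : ∀ x, f x = MvPolynomial.eval (fun i => x i) p) :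
    ∃ ρ > 0, orliczInt n ρ f < ⊤ := by
  set C : ℝ := (∑ m ∈ p.support, |p.coeff m|) + 1 with hC
  have hCpos : 0 < C := by
    have : (0:ℝ) ≤ ∑ m ∈ p.support, |p.coeff m| :=
      Finset.sum_nonneg fun m _ => abs_nonneg _
    linarith
  refine ⟨1 / (8 * C), by positivity, ?_⟩
  -- pointwise bound
  have key : ∀ x : EuclideanSpace ℝ (Fin n),
      ENNReal.ofReal (Real.cosh (1 / (8 * C) * f x) - 1) * ENNReal.ofReal (gaussM n x)
        ≤ ENNReal.ofReal (Real.exp (4⁻¹) * (2 * π) ^ (-(n : ℝ) / 2) *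
            Real.exp (-(4:ℝ)⁻¹ * ‖x‖ ^ 2)) := by
    intro x
    have hfb : |f x| ≤ C * (1 + ‖x‖) ^ 2 := by
      rw [hfp x]
      refine (poly_bound p hdeg x).trans ?_
      apply mul_le_mul_of_nonneg_right _ (by positivity)
      simp [hC]
    have h1 : Real.cosh (1 / (8 * C) * f x) - 1 ≤ Real.exp (|1 / (8 * C) * f x|) := by
      have := Real.cosh_abs (1 / (8 * C) * f x)
      have h2 : Real.cosh |1 / (8 * C) * f x| ≤ Real.exp |1 / (8 * C) * f x| := by
        rw [Real.cosh_eq]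
        have := Real.exp_le_exp.2 (neg_le_self (abs_nonneg (1 / (8 * C) * f x)))
        linarith
      linarith [Real.cosh_abs (1 / (8 * C) * f x)]
    have h3 : |1 / (8 * C) * f x| ≤ (4:ℝ)⁻¹ + 4⁻¹ * ‖x‖ ^ 2 := by
      rw [abs_mul]
      have hx : (1 + ‖x‖) ^ 2 ≤ 2 + 2 * ‖x‖ ^ 2 := by
        nlinarith [norm_nonneg x, sq_nonneg (1 - ‖x‖)]
      have : |1 / (8 * C)| * |f x| ≤ 1 / (8 * C) * (C * (2 + 2 * ‖x‖ ^ 2)) := by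
        rw [abs_of_pos (by positivity)]
        apply mul_le_mul_of_nonneg_left _ (by positivity)
        exact hfb.trans (mul_le_mul_of_nonneg_left hx hCpos.le)
      calc |1 / (8 * C)| * |f x| ≤ 1 / (8 * C) * (C * (2 + 2 * ‖x‖ ^ 2)) := this
        _ = (4:ℝ)⁻¹ + 4⁻¹ * ‖x‖ ^ 2 := by field_simp; ring
    have hg : (0:ℝ) < (2 * π) ^ (-(n : ℝ) / 2) :=
      Real.rpow_pos_of_pos (by positivity) _
    rw [← ENNReal.ofReal_mul (sub_nonneg.2 (Real.one_le_cosh _))]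
    apply ENNReal.ofReal_le_ofReal
    have hb : Real.cosh (1 / (8 * C) * f x) - 1 ≤ Real.exp ((4:ℝ)⁻¹ + 4⁻¹ * ‖x‖ ^ 2) :=
      h1.trans (Real.exp_le_exp.2 h3)
    have hgnn : 0 ≤ gaussM n x := by
      unfold gaussM; positivity
    calc (Real.cosh (1 / (8 * C) * f x) - 1) * gaussM n x
        ≤ Real.exp ((4:ℝ)⁻¹ + 4⁻¹ * ‖x‖ ^ 2) * gaussM n x := by
          rcases le_or_gt (Real.cosh (1 / (8 * C) * f x) - 1) 0 with h | h
          · exact le_trans (mul_nonpos_of_nonpos_of_nonneg h hgnn)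
              (mul_nonneg (Real.exp_nonneg _) hgnn)
          · exact mul_le_mul_of_nonneg_right hb hgnn
      _ = Real.exp (4⁻¹) * (2 * π) ^ (-(n : ℝ) / 2) * Real.exp (-(4:ℝ)⁻¹ * ‖x‖ ^ 2) := by
          unfold gaussM
          rw [Real.exp_add,
            show -(4:ℝ)⁻¹ * ‖x‖ ^ 2 = 4⁻¹ * ‖x‖ ^ 2 + -‖x‖ ^ 2 / 2 by ring,
            Real.exp_add]
          ring
  -- finiteness
  have hint : Integrable (fun x : EuclideanSpace ℝ (Fin n) =>
      Real.exp (4⁻¹) * (2 * π) ^ (-(n : ℝ) / 2) * Real.exp (-(4:ℝ)⁻¹ * ‖x‖ ^ 2)) :=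
    (integrable_rexp_neg_quarter n).const_mul _
  calc orliczInt n (1 / (8 * C)) f
      ≤ ∫⁻ x, ENNReal.ofReal (Real.exp (4⁻¹) * (2 * π) ^ (-(n : ℝ) / 2) *
          Real.exp (-(4:ℝ)⁻¹ * ‖x‖ ^ 2)) := lintegral_mono key
    _ < ⊤ := hint.lintegral_lt_top
end

section
/- Let $M$ be the standard Gaussian density on $\mathbb{R}^n$, $h \in \mathbb{R}^n$, and $f$ measurable. Then for every $\rho > 0$, $\int (\cosh(\rho f(x-h)) - 1) M(x)\,dx \le \frac{1}{\sqrt{2}} e^{|h|^2/2} \left(\int (\cosh(2\rho f(z)) - 1) M(z)\,dz\right)^{1/2}$. -/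
/-! Translating the Gaussian by `h` multiplies it by the Cameron–Martin factor
`exp (-⟪h, z⟫ - ‖h‖² / 2)`, so with `γ` the Gaussian measure the left side is
`∫ (cosh (ρ f) - 1) · exp (-⟪h, ·⟫ - ‖h‖² / 2) dγ`. Cauchy–Schwarz in `L²(γ)` bounds it by the
product of `(∫ (cosh (ρ f) - 1)² dγ)^(1/2)`, which is at most `(½ ∫ (cosh (2ρ f) - 1) dγ)^(1/2)`
since `(cosh u - 1)² ≤ (cosh 2u - 1) / 2`, and `(∫ exp (-2⟪h, ·⟫ - ‖h‖²) dγ)^(1/2)`, which equals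
`exp (‖h‖² / 2)` by the same shift with `2h`. -/
open MeasureTheory Real Filter Topology
open scoped ENNReal

open scoped RealInnerProductSpace

theorem ENNReal.lintegral_mul_le_Lp_mul_Lq_of_measurable_right {α : Type*} [MeasurableSpace α]
    (μ : Measure α) {p q : ℝ} (hpq : p.HolderConjugate q) (f : α → ℝ≥0∞) {g : α → ℝ≥0∞}
    (hg : Measurable g) (hg_top : ∀ x, g x ≠ ⊤) :
    ∫⁻ a, f a * g a ∂μ ≤ (∫⁻ a, f a ^ p ∂μ) ^ (1 / p) * (∫⁻ a, g a ^ q ∂μ) ^ (1 / q) := by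
  -- `f` need not be measurable: Hölder is applied to `m / g ≤ f`, where `m ≤ f * g` is a
  -- measurable minorant with the same integral.
  obtain ⟨m, hm, hm_le, hm_eq⟩ := exists_measurable_le_lintegral_eq μ fun a => f a * g a
  have hm_div_le : ∀ a, m a / g a ≤ f a := fun a => ENNReal.div_le_of_le_mul (hm_le a)
  have hm_eq_div_mul : ∀ a, m a = m a / g a * g a := by
    intro a
    rcases eq_or_ne (g a) 0 with hga | hga
    · simpa [hga] using hm_le a
    · rw [ENNReal.div_mul_cancel hga (hg_top a)]
  calc ∫⁻ a, f a * g a ∂μ = ∫⁻ a, m a / g a * g a ∂μ := by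
        simp_rw [hm_eq, ← hm_eq_div_mul]
    _ ≤ (∫⁻ a, (m a / g a) ^ p ∂μ) ^ (1 / p) * (∫⁻ a, g a ^ q ∂μ) ^ (1 / q) :=
        ENNReal.lintegral_mul_le_Lp_mul_Lq μ hpq (hm.div hg).aemeasurable hg.aemeasurable
    _ ≤ (∫⁻ a, f a ^ p ∂μ) ^ (1 / p) * (∫⁻ a, g a ^ q ∂μ) ^ (1 / q) := by
        gcongr with a
        · exact one_div_nonneg.2 hpq.nonneg
        · exact hpq.nonneg
        · exact hm_div_le a

theorem Real.sq_cosh_sub_one_le (u : ℝ) : (cosh u - 1) ^ 2 ≤ (cosh (2 * u) - 1) / 2 := by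
  rw [cosh_two_mul, sinh_sq]
  nlinarith [one_le_cosh u]

section Gaussian

variable {n : ℕ}

lemma gaussM_nonneg (x : EuclideanSpace ℝ (Fin n)) : 0 ≤ gaussM n x := by
  unfold gaussM; positivity

lemma gaussM_add (z h : EuclideanSpace ℝ (Fin n)) :
    gaussM n (z + h) = exp (-⟪h, z⟫ - ‖h‖ ^ 2 / 2) * gaussM n z := by
  unfold gaussM
  rw [mul_left_comm, ← exp_add, norm_add_sq_real, real_inner_comm]
  ring_nf

lemma integral_gaussM : ∫ z, gaussM n z = 1 := by
  have hM : (fun z => gaussM n z) =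
      fun z => (2 * π) ^ (-(n : ℝ) / 2) * exp (-(1 / 2) * ‖z‖ ^ 2) := by
    funext z; unfold gaussM; ring_nf
  rw [hM, integral_const_mul, GaussianFourier.integral_rexp_neg_mul_sq_norm (by norm_num),
    finrank_euclideanSpace_fin, div_div_eq_mul_div, div_one, mul_comm π,
    ← rpow_add (by positivity), neg_div, neg_add_cancel, rpow_zero]

lemma lintegral_gaussM : ∫⁻ z, ENNReal.ofReal (gaussM n z) = 1 := by
  rw [← ofReal_integral_eq_lintegral_ofReal
    (Integrable.of_integral_ne_zero (by simp [integral_gaussM])) (.of_forall gaussM_nonneg),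
    integral_gaussM, ENNReal.ofReal_one]

variable (n) in
noncomputable def gaussMeasure : Measure (EuclideanSpace ℝ (Fin n)) :=
  volume.withDensity fun x => ENNReal.ofReal (gaussM n x)

lemma lintegral_mul_gaussM (G : EuclideanSpace ℝ (Fin n) → ℝ≥0∞) :
    ∫⁻ x, G x * ENNReal.ofReal (gaussM n x) = ∫⁻ x, G x ∂gaussMeasure n := by
  rw [gaussMeasure, lintegral_withDensity_eq_lintegral_mul_non_measurable _
    (by unfold gaussM; fun_prop) (.of_forall fun _ => ENNReal.ofReal_lt_top)]
  simp only [Pi.mul_apply, mul_comm]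

lemma lintegral_comp_sub_mul_gaussM (G : EuclideanSpace ℝ (Fin n) → ℝ≥0∞)
    (h : EuclideanSpace ℝ (Fin n)) :
    ∫⁻ x, G (x - h) * ENNReal.ofReal (gaussM n x) =
      ∫⁻ z, G z * ENNReal.ofReal (exp (-⟪h, z⟫ - ‖h‖ ^ 2 / 2)) ∂gaussMeasure n := by
  rw [← lintegral_add_right_eq_self _ h, ← lintegral_mul_gaussM]
  simp_rw [add_sub_cancel_right, gaussM_add, ENNReal.ofReal_mul (exp_pos _).le, mul_assoc]

lemma lintegral_exp_inner_gaussMeasure (k : EuclideanSpace ℝ (Fin n)) :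
    ∫⁻ z, ENNReal.ofReal (exp (-⟪k, z⟫ - ‖k‖ ^ 2 / 2)) ∂gaussMeasure n = 1 := by
  simpa [lintegral_gaussM] using (lintegral_comp_sub_mul_gaussM (fun _ => 1) k).symm

lemma lintegral_sq_exp_inner_gaussMeasure (h : EuclideanSpace ℝ (Fin n)) :
    ∫⁻ z, ENNReal.ofReal (exp (-⟪h, z⟫ - ‖h‖ ^ 2 / 2)) ^ (2 : ℝ) ∂gaussMeasure n =
      ENNReal.ofReal (exp (‖h‖ ^ 2)) := by
  have hsq : ∀ z, ENNReal.ofReal (exp (-⟪h, z⟫ - ‖h‖ ^ 2 / 2)) ^ (2 : ℝ) =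
      ENNReal.ofReal (exp (‖h‖ ^ 2)) *
        ENNReal.ofReal (exp (-⟪(2 : ℝ) • h, z⟫ - ‖(2 : ℝ) • h‖ ^ 2 / 2)) := by
    intro z
    rw [ENNReal.rpow_two, ← ENNReal.ofReal_pow (exp_pos _).le,
      ← ENNReal.ofReal_mul (exp_pos _).le, ← exp_nat_mul, ← exp_add, norm_smul, inner_smul_left]
    congr 2
    simp only [Nat.cast_ofNat, ringHom_apply, norm_ofNat]
    ring
  simp_rw [hsq]
  rw [lintegral_const_mul' _ _ ENNReal.ofReal_ne_top, lintegral_exp_inner_gaussMeasure, mul_one]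

end Gaussian

theorem translation_orlicz_estimate_general (n : ℕ) (h : EuclideanSpace ℝ (Fin n))
    (f : EuclideanSpace ℝ (Fin n) → ℝ) (ρ : ℝ) :
    (∫⁻ x, ENNReal.ofReal (Real.cosh (ρ * f (x - h)) - 1) * ENNReal.ofReal (gaussM n x)) ≤
      ENNReal.ofReal (Real.exp (‖h‖ ^ 2 / 2) / Real.sqrt 2) *
        (∫⁻ z, ENNReal.ofReal (Real.cosh (2 * ρ * f z) - 1) *
          ENNReal.ofReal (gaussM n z)) ^ ((1 : ℝ) / 2) := by
  set I := ∫⁻ z, ENNReal.ofReal (cosh (2 * ρ * f z) - 1) * ENNReal.ofReal (gaussM n z)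
  let G z := ENNReal.ofReal (cosh (ρ * f z) - 1)
  have hG_sq : ∫⁻ z, G z ^ (2 : ℝ) ∂gaussMeasure n ≤ ENNReal.ofReal (1 / 2) * I := by
    rw [← lintegral_mul_gaussM, ← lintegral_const_mul' _ _ ENNReal.ofReal_ne_top]
    refine lintegral_mono fun z => ?_
    rw [ENNReal.rpow_two, ← ENNReal.ofReal_pow (sub_nonneg.2 (one_le_cosh _)), ← mul_assoc,
      ← ENNReal.ofReal_mul (by norm_num : (0 : ℝ) ≤ 1 / 2)]
    gcongr
    rw [mul_assoc 2]
    linarith [sq_cosh_sub_one_le (ρ * f z)]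
  calc _ = ∫⁻ z, G z * ENNReal.ofReal (exp (-⟪h, z⟫ - ‖h‖ ^ 2 / 2)) ∂gaussMeasure n :=
        lintegral_comp_sub_mul_gaussM G h
    _ ≤ (∫⁻ z, G z ^ (2 : ℝ) ∂gaussMeasure n) ^ (1 / 2 : ℝ) *
          (∫⁻ z, ENNReal.ofReal (exp (-⟪h, z⟫ - ‖h‖ ^ 2 / 2)) ^ (2 : ℝ) ∂gaussMeasure n) ^
            (1 / 2 : ℝ) :=
        ENNReal.lintegral_mul_le_Lp_mul_Lq_of_measurable_right _ .two_two G (by fun_prop)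
          fun _ => ENNReal.ofReal_ne_top
    _ ≤ (ENNReal.ofReal (1 / 2) * I) ^ (1 / 2 : ℝ) *
          ENNReal.ofReal (exp (‖h‖ ^ 2)) ^ (1 / 2 : ℝ) := by
        rw [lintegral_sq_exp_inner_gaussMeasure]
        exact mul_le_mul_left (ENNReal.rpow_le_rpow hG_sq (by norm_num)) _
    _ = _ := by
        rw [ENNReal.mul_rpow_of_nonneg _ _ (by norm_num), mul_right_comm,
          ← ENNReal.mul_rpow_of_nonneg _ _ (by norm_num), ← ENNReal.ofReal_mul (by norm_num),
          ENNReal.ofReal_rpow_of_nonneg (by positivity) (by norm_num), ← sqrt_eq_rpow,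
          sqrt_mul (by norm_num), ← exp_half, one_div, sqrt_inv, inv_mul_eq_div]

theorem translation_orlicz_estimate (n : ℕ) (h : EuclideanSpace ℝ (Fin n))
    (f : EuclideanSpace ℝ (Fin n) → ℝ) (ρ : ℝ) (hρ : 0 < ρ) :
    (∫⁻ x, ENNReal.ofReal (Real.cosh (ρ * f (x - h)) - 1) * ENNReal.ofReal (gaussM n x)) ≤
      ENNReal.ofReal (Real.exp (‖h‖ ^ 2 / 2) / Real.sqrt 2) *
        (∫⁻ z, ENNReal.ofReal (Real.cosh (2 * ρ * f z) - 1) *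
          ENNReal.ofReal (gaussM n z)) ^ ((1 : ℝ) / 2) :=
  translation_orlicz_estimate_general n h f ρ
end
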